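/- arXiv:0802.0017 — 6 statements merged into one kernel-verified Lean document; each statement's English description precedes it below -/
import Mathlib

section
/- Let m ≥ 2 be an integer and let i, j be natural numbers. Then there exists a carry pattern c such that the sum (as polynomials over ℤ) of the base polynomial of i in base m and the base polynomial of j in base m equals the variant polynomial of i+j with carry pattern c in base m. (Paper's Lemma 1: if V₂[0] is aligned with the base polynomial representing V₁[i], then V₂[j] is aligned with one of the polynomials representing V₁[i+j].) -/
/-- A carry pattern: starts at 0, each carry is at most 1, and eventually 0. -/
def IsCarryPattern (c : ℕ → ℕ) : Prop :=
  c 0 = 0 ∧ (∀ k, c k ≤ 1) ∧ ∃ K, ∀ k ≥ K, c k = 0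

/-- `P` is the base polynomial of `n` in base `m`: its `k`-th coefficient is the
`k`-th digit of `n` in base `m`. -/
def IsBasePoly (m n : ℕ) (P : Polynomial ℤ) : Prop :=
  ∀ k, P.coeff k = ((n / m ^ k % m : ℕ) : ℤ)

/-- `P` is the variant polynomial of `n` with carry pattern `c` in base `m`: its
`k`-th coefficient is `d_k + m * c (k+1) - c k` where `d_k` is the `k`-th digit
of `n` in base `m`. -/
def IsVariantPoly (m n : ℕ) (c : ℕ → ℕ) (P : Polynomial ℤ) : Prop :=
  ∀ k, P.coeff k = ((n / m ^ k % m : ℕ) : ℤ) + (m : ℤ) * c (k + 1) - c k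


/-!
The carry into position `k` when adding `i` and `j` in base `m` is
`c k = ⌊(i + j) / m^k⌋ - ⌊i / m^k⌋ - ⌊j / m^k⌋`, which is `0` or `1`, vanishes at `k = 0` and once
`i + j < m^k`. Since the `k`-th digit of `n` is `⌊n / m^k⌋ - m ⌊n / m^(k+1)⌋`, the `k`-th digits of `i`
and `j` add up to the `k`-th digit of `i + j` plus `m c(k+1) - c k`.
-/

namespace Nat

def divCarry (i j M : ℕ) : ℕ := (i + j) / M - (i / M + j / M)

theorem cast_divCarry (i j M : ℕ) :
    (divCarry i j M : ℤ) = ((i + j) / M : ℕ) - (i / M : ℕ) - (j / M : ℕ) := by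
  rw [divCarry, Nat.cast_sub div_add_div_le_add_div]
  push_cast
  ring

theorem divCarry_le_one (i j M : ℕ) : divCarry i j M ≤ 1 := by
  have := add_div_le_div_add_div_add_one i j M
  unfold divCarry
  omega

@[simp]
theorem divCarry_one (i j : ℕ) : divCarry i j 1 = 0 := by
  simp [divCarry]

theorem divCarry_eq_zero_of_lt {i j M : ℕ} (h : i + j < M) : divCarry i j M = 0 := by
  simp [divCarry, div_eq_of_lt h]

theorem cast_div_mod_eq_sub (n M m : ℕ) :
    ((n / M % m : ℕ) : ℤ) = (n / M : ℕ) - m * (n / (M * m) : ℕ) := by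
  rw [← Nat.div_div_eq_div_mul, eq_sub_iff_add_eq]
  exact_mod_cast mod_add_div (n / M) m

end Nat

open Nat

/-- Paper's Lemma 1: the sum of the base polynomials of `i` and `j` in base `m`
equals the variant polynomial of `i + j` with some carry pattern `c`. -/
theorem basePoly_add_eq_variantPoly (m : ℕ) (hm : 2 ≤ m) (i j : ℕ) :
    ∃ c : ℕ → ℕ, IsCarryPattern c ∧
      ∀ P Q R : Polynomial ℤ, IsBasePoly m i P → IsBasePoly m j Q →
        IsVariantPoly m (i + j) c R → P + Q = R := by
  refine ⟨fun k => divCarry i j (m ^ k), ⟨by simp, fun k => divCarry_le_one _ _ _, ?_⟩, ?_⟩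
  · refine ⟨i + j, fun k hk => divCarry_eq_zero_of_lt ?_⟩
    exact (Nat.lt_pow_self hm).trans_le (pow_le_pow_right₀ (by omega) hk)
  · intro P Q R hP hQ hR
    ext k
    rw [Polynomial.coeff_add, hP, hQ, hR]
    simp only [cast_div_mod_eq_sub, cast_divCarry, pow_succ]
    ring
end

section
/- Let m ≥ 2 be an integer. The map sending a pair (n, c), where n is a natural number and c is a carry pattern, to the variant polynomial of n with carry pattern c in base m, is injective: if the variant polynomial of n with pattern c equals the variant polynomial of n' with pattern c', then n = n' and c = c'. (Paper's claim that all the 2^c × n₁ created polynomials are unique.) -/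
namespace Nat

theorem mod_pow_eq_of_forall_div_pow_mod_eq {b n n' : ℕ}
    (h : ∀ k, n / b ^ k % b = n' / b ^ k % b) (K : ℕ) : n % b ^ K = n' % b ^ K := by
  induction K with
  | zero => simp only [pow_zero, Nat.mod_one]
  | succ K ih => rw [Nat.mod_pow_succ, Nat.mod_pow_succ, ih, h]

theorem eq_of_forall_div_pow_mod_eq {b n n' : ℕ} (hb : 1 < b)
    (h : ∀ k, n / b ^ k % b = n' / b ^ k % b) : n = n' := by
  have hn : n < b ^ (n + n') := (Nat.lt_pow_self hb).trans_le' (Nat.le_add_right n n')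
  have hn' : n' < b ^ (n + n') := (Nat.lt_pow_self hb).trans_le' (Nat.le_add_left n' n)
  simpa only [Nat.mod_eq_of_lt hn, Nat.mod_eq_of_lt hn'] using
    mod_pow_eq_of_forall_div_pow_mod_eq h (n + n')

theorem eq_and_eq_of_add_mul_eq {b d d' q q' : ℕ} (hd : d < b) (hd' : d' < b)
    (h : d + b * q = d' + b * q') : d = d' ∧ q = q' := by
  have hb : 0 < b := Nat.zero_lt_of_lt hd
  obtain ⟨hq, hr⟩ := (Nat.div_mod_unique hb).2 ⟨h, hd⟩
  obtain ⟨hq', hr'⟩ := (Nat.div_mod_unique hb).2 ⟨rfl, hd'⟩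
  exact ⟨hr.symm.trans hr', hq.symm.trans hq'⟩

end Nat

theorem IsVariantPoly.digit_eq_and_carry_succ_eq {m n n' k : ℕ} {c c' : ℕ → ℕ}
    {R : Polynomial ℤ} (hm : 0 < m) (hR : IsVariantPoly m n c R) (hR' : IsVariantPoly m n' c' R)
    (hk : c k = c' k) : n / m ^ k % m = n' / m ^ k % m ∧ c (k + 1) = c' (k + 1) := by
  have hcoeff := (hR k).symm.trans (hR' k)
  rw [hk] at hcoeff
  refine Nat.eq_and_eq_of_add_mul_eq (Nat.mod_lt _ hm) (Nat.mod_lt _ hm) ?_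
  exact_mod_cast (by linarith : ((n / m ^ k % m : ℕ) : ℤ) + (m : ℤ) * c (k + 1)
    = ((n' / m ^ k % m : ℕ) : ℤ) + (m : ℤ) * c' (k + 1))

/-- The map `(n, c) ↦` variant polynomial of `n` with carry pattern `c` in base `m`
is injective: all the created polynomials are unique. -/
theorem variantPoly_injective (m : ℕ) (hm : 2 ≤ m) (n n' : ℕ) (c c' : ℕ → ℕ)
    (hc : IsCarryPattern c) (hc' : IsCarryPattern c')
    (R R' : Polynomial ℤ) (hR : IsVariantPoly m n c R) (hR' : IsVariantPoly m n' c' R')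
    (h : R = R') : n = n' ∧ c = c' := by
  subst h
  have hcarry : ∀ k, c k = c' k := by
    intro k
    induction k with
    | zero => rw [hc.1, hc'.1]
    | succ k ih => exact (hR.digit_eq_and_carry_succ_eq (by omega) hR' ih).2
  have hdigit : ∀ k, n / m ^ k % m = n' / m ^ k % m := fun k =>
    (hR.digit_eq_and_carry_succ_eq (by omega) hR' (hcarry k)).1
  exact ⟨Nat.eq_of_forall_div_pow_mod_eq hm hdigit, funext hcarry⟩
end

section
/- Let q be a prime, let S be a finite set of polynomials over the field 𝔽_q = ZMod q, each of degree at most c, and let P ∈ S. Then the number of elements x ∈ 𝔽_q at which P appears as a singleton (i.e., R(x) ≠ P(x) for every R ∈ S with R ≠ P) is at least q − c · (|S| − 1). In particular, if q ≥ 2c·(|S| − 1), then P appears as a singleton for at least half of the q assignments. -/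
/-!
Outside the points where `P` appears as a singleton, `P` agrees with some other `R ∈ S`, i.e.
the point is a root of the nonzero polynomial `R - P`, of degree at most `c`. Over an integral
domain each of these `|S| - 1` differences has at most `c` roots, so at most `c * (|S| - 1)` of
the `q` points are lost.
-/

open Polynomial Finset

variable {K : Type*} [CommRing K] [IsDomain K] [Fintype K] [DecidableEq K]

theorem Polynomial.card_filter_eval_eq_le {R P : K[X]} (h : R ≠ P) :
    #{x | R.eval x = P.eval x} ≤ max R.natDegree P.natDegree := by
  have hroots : (filter (fun x => R.eval x = P.eval x) univ).val ⊆ (R - P).roots := by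
    intro x hx
    rw [mem_roots (sub_ne_zero.2 h), IsRoot, eval_sub, sub_eq_zero]
    exact (mem_filter.1 hx).2
  exact (card_le_degree_of_subset_roots hroots).trans (natDegree_sub_le R P)

theorem Polynomial.card_filter_exists_eval_eq_le {c : ℕ} {S : Finset K[X]}
    (hdeg : ∀ R ∈ S, R.natDegree ≤ c) {P : K[X]} (hP : P ∈ S) :
    #{x | ∃ R ∈ S, R ≠ P ∧ R.eval x = P.eval x} ≤ c * (#S - 1) := by
  have hsub : filter (fun x => ∃ R ∈ S, R ≠ P ∧ R.eval x = P.eval x) univ ⊆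
      (S.erase P).biUnion fun R => filter (fun x => R.eval x = P.eval x) univ := by
    intro x hx
    obtain ⟨R, hR, hRP, hx⟩ := (mem_filter.1 hx).2
    exact mem_biUnion.2 ⟨R, mem_erase.2 ⟨hRP, hR⟩, mem_filter.2 ⟨mem_univ x, hx⟩⟩
  calc _ ≤ _ := card_le_card hsub
    _ ≤ ∑ R ∈ S.erase P, #{x | R.eval x = P.eval x} := card_biUnion_le
    _ ≤ #(S.erase P) • c := by
      refine sum_le_card_nsmul _ _ _ fun R hR => ?_
      exact (card_filter_eval_eq_le (ne_of_mem_erase hR)).trans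
        (max_le (hdeg R (mem_of_mem_erase hR)) (hdeg P hP))
    _ = c * (#S - 1) := by rw [card_erase_of_mem hP, smul_eq_mul, mul_comm]

theorem Polynomial.card_sub_le_card_filter_forall_eval_ne {c : ℕ} {S : Finset K[X]}
    (hdeg : ∀ R ∈ S, R.natDegree ≤ c) {P : K[X]} (hP : P ∈ S) :
    Fintype.card K - c * (#S - 1) ≤ #{x | ∀ R ∈ S, R ≠ P → R.eval x ≠ P.eval x} := by
  have hsplit := card_filter_add_card_filter_not (s := univ)
    (fun x : K => ∀ R ∈ S, R ≠ P → R.eval x ≠ P.eval x)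
  have hbad : #{x | ¬∀ R ∈ S, R ≠ P → R.eval x ≠ P.eval x} ≤ c * (#S - 1) := by
    simpa only [not_forall, not_not, exists_prop] using card_filter_exists_eval_eq_le hdeg hP
  rw [card_univ] at hsplit
  omega

/-- Given a finite set `S` of polynomials over `𝔽_q`, each of degree at most `c`,
and `P ∈ S`, the number of assignments `x ∈ 𝔽_q` at which `P` appears as a
singleton is at least `q - c * (|S| - 1)`; in particular if `q ≥ 2c(|S| - 1)`
then `P` appears as a singleton for at least half of the `q` assignments. -/
theorem singleton_assignments_bound (q : ℕ) (hq : q.Prime) (c : ℕ)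
    (S : Finset (Polynomial (ZMod q))) (hdeg : ∀ R ∈ S, R.natDegree ≤ c)
    (P : Polynomial (ZMod q)) (hP : P ∈ S) :
    q - c * (S.card - 1) ≤
      {x : ZMod q | ∀ R ∈ S, R ≠ P → R.eval x ≠ P.eval x}.ncard ∧
    (2 * c * (S.card - 1) ≤ q →
      q ≤ 2 * {x : ZMod q | ∀ R ∈ S, R ≠ P → R.eval x ≠ P.eval x}.ncard) := by
  have : Fact q.Prime := ⟨hq⟩
  have hbound := card_sub_le_card_filter_forall_eval_ne hdeg hP
  rw [ZMod.card, ← Set.ncard_coe_finset (filter _ univ), coe_filter_univ] at hbound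
  refine ⟨hbound, fun hq2 => ?_⟩
  rw [mul_assoc] at hq2
  omega
end

section
/- Let R be a nonempty finite set (rows), C a finite set (columns), and M a relation between R and C such that every column j ∈ C satisfies |R| ≤ 2·|{i ∈ R : M i j}|. Then there exists a subset S ⊆ R with |S| ≤ log₂|C| + 1 (e.g., |S| ≤ Nat.log 2 |C| + 1) such that every column j ∈ C is covered by some row in S, i.e., for every j ∈ C there is i ∈ S with M i j. -/
/-! The greedy covering only needs that every nonempty set `T` of still uncovered columns has
a row with `1`'s in at least half of `T`: taking that row leaves at most `|T| / 2` columns, so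
after `log₂ |C| + 1` rounds nothing is left. When every column is at least half full, such a row
exists by double counting the `1`'s of the table restricted to `T`. -/

open Finset

namespace RowCover

variable {R C : Type*} (M : R → C → Prop) [∀ i j, Decidable (M i j)]

def Covers (S : Finset R) (T : Finset C) : Prop := ∀ j ∈ T, ∃ i ∈ S, M i j

lemma exists_row_two_mul_card_filter_ge [Fintype R] [Nonempty R]
    (hcol : ∀ j, Fintype.card R ≤ 2 * #{i | M i j}) (T : Finset C) :
    ∃ i, #T ≤ 2 * #{j ∈ T | M i j} := by
  have hcount : ∑ _i : R, #T ≤ ∑ i : R, 2 * #{j ∈ T | M i j} :=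
    calc ∑ _i : R, #T = ∑ _j ∈ T, Fintype.card R := by simp [mul_comm]
      _ ≤ ∑ j ∈ T, 2 * #{i | M i j} := sum_le_sum fun j _ ↦ hcol j
      _ = ∑ i : R, 2 * #{j ∈ T | M i j} := by
        simp_rw [← mul_sum]
        exact congrArg _ (sum_card_bipartiteAbove_eq_sum_card_bipartiteBelow M).symm
  obtain ⟨i, -, hi⟩ := exists_le_of_sum_le univ_nonempty hcount
  exact ⟨i, hi⟩

lemma log_add_one_le_log_of_two_mul_le {m n : ℕ} (hm : m ≠ 0) (h : 2 * m ≤ n) :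
    Nat.log 2 m + 1 ≤ Nat.log 2 n :=
  Nat.log_mul_base one_lt_two hm ▸ Nat.log_mono_right (by omega)

lemma covers_insert_of_covers_filter_not [DecidableEq R] {i : R} {S : Finset R} {T : Finset C}
    (h : Covers M S {j ∈ T | ¬M i j}) : Covers M (insert i S) T := fun j hj ↦
  if hij : M i j then ⟨i, mem_insert_self i S, hij⟩ else
    let ⟨i', hi'S, hi'j⟩ := h j (mem_filter.2 ⟨hj, hij⟩)
    ⟨i', mem_insert_of_mem hi'S, hi'j⟩

lemma exists_covers_card_le_log_of_halving [DecidableEq R]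
    (hhalf : ∀ T : Finset C, T.Nonempty → ∃ i, #T ≤ 2 * #{j ∈ T | M i j}) (T : Finset C) :
    ∃ S : Finset R, #S ≤ Nat.log 2 #T + 1 ∧ Covers M S T := by
  induction T using strongInduction with
  | H T ih =>
  obtain rfl | hT := T.eq_empty_or_nonempty
  · exact ⟨∅, by simp, by simp [Covers]⟩
  obtain ⟨i, hi⟩ := hhalf T hT
  set T' := {j ∈ T | ¬M i j}
  have hsplit : #{j ∈ T | M i j} + #T' = #T := card_filter_add_card_filter_not _
  obtain hT' | hT' := T'.eq_empty_or_nonempty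
  · have hcovers : Covers M ∅ T' := by simp [Covers, hT']
    exact ⟨{i}, by simp, covers_insert_of_covers_filter_not M hcovers⟩
  have hT'T : T' ⊂ T := filter_ssubset.2 <| by
    have hpos : 0 < #{j ∈ T | M i j} := by have := hT.card_pos; omega
    simpa [filter_nonempty_iff] using card_pos.1 hpos
  obtain ⟨S, hS, hScovers⟩ := ih T' hT'T
  have hlog := log_add_one_le_log_of_two_mul_le hT'.card_pos.ne' (by omega : 2 * #T' ≤ #T)
  exact ⟨insert i S, (card_insert_le i S).trans (by omega),
    covers_insert_of_covers_filter_not M hScovers⟩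

end RowCover

/-- Recursive halving: if a 0-1 table with nonempty finite row set `R` and finite
column set `C` is at least half full in every column, then there is a set `S` of
at most `log₂ |C| + 1` rows covering every column. -/
theorem exists_small_covering_row_set (R C : Type*) [Fintype R] [Fintype C]
    [Nonempty R] (M : R → C → Prop)
    (hcol : ∀ j : C, Fintype.card R ≤ 2 * {i : R | M i j}.ncard) :
    ∃ S : Finset R, S.card ≤ Nat.log 2 (Fintype.card C) + 1 ∧
      ∀ j : C, ∃ i ∈ S, M i j := by
  classical
  have hcol' : ∀ j, Fintype.card R ≤ 2 * #{i | M i j} := fun j ↦ by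
    simpa [Set.ncard_eq_toFinset_card'] using hcol j
  obtain ⟨S, hS, hcover⟩ := RowCover.exists_covers_card_le_log_of_halving M
    (fun T _ ↦ RowCover.exists_row_two_mul_card_filter_ge M hcol' T) univ
  exact ⟨S, by simpa using hS, fun j ↦ hcover j (mem_univ j)⟩
end

section
/- Let q be a prime and let S be a finite set of polynomials over the field 𝔽_q = ZMod q, each of degree at most c, with q ≥ 2c·|S| and S nonempty. Then there exists a set A ⊆ 𝔽_q of assignments with |A| ≤ log₂|S| + 1 (e.g., |A| ≤ Nat.log 2 |S| + 1) such that every polynomial P ∈ S appears as a singleton at some a ∈ A: for each P ∈ S there is a ∈ A with R(a) ≠ P(a) for all R ∈ S, R ≠ P. (Main result of the paper's length-reduction technique: O(log n₁) assignments suffice so that each polynomial appears as a singleton at least once.) -/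
/-!
Two distinct polynomials of degree at most `c` agree at no more than `c` points, so a fixed
`P ∈ S` fails to be a singleton at no more than `c·|S|` of the `q` assignments. Double counting
over any subfamily `T ⊆ S` and `q ≥ 2c|S|` then give an assignment at which at least half of `T`
are singletons. Picking such an assignment and recursing on the remaining half covers `S` after
`log₂ |S| + 1` rounds.
-/

open Finset Polynomial

namespace Finset

variable {α β : Type*} [DecidableEq β]

open Classical in
theorem exists_cover_card_le_log_of_halving (good : α → β → Prop) (S : Finset α)
    (halving : ∀ T ⊆ S, ∃ b, 2 * #{x ∈ T | ¬ good x b} ≤ #T) :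
    ∃ A : Finset β, #A ≤ Nat.log 2 #S + 1 ∧ ∀ x ∈ S, ∃ b ∈ A, good x b := by
  induction S using Finset.strongInduction with
  | H T ih =>
    obtain rfl | hT := T.eq_empty_or_nonempty
    · exact ⟨∅, by simp, by simp⟩
    obtain ⟨b, hb⟩ := halving T subset_rfl
    set T' := {x ∈ T | ¬ good x b}
    have cover_of_cover_T' : ∀ A : Finset β, (∀ x ∈ T', ∃ b' ∈ A, good x b') →
        ∀ x ∈ T, ∃ b' ∈ insert b A, good x b' := by
      intro A hA x hx
      by_cases hxb : good x b
      · exact ⟨b, mem_insert_self b A, hxb⟩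
      · obtain ⟨b', hb', hgood⟩ := hA x (mem_filter.2 ⟨hx, hxb⟩)
        exact ⟨b', mem_insert_of_mem hb', hgood⟩
    obtain hT' | hT' := T'.eq_empty_or_nonempty
    · exact ⟨{b}, by simp, cover_of_cover_T' ∅ (by simp [hT'])⟩
    have hT'T : T' ⊂ T := by
      refine ssubset_iff_subset_ne.2 ⟨filter_subset _ _, fun h => ?_⟩
      have := congrArg card h
      have := hT.card_pos
      omega
    obtain ⟨A, hA, hcover⟩ :=
      ih T' hT'T fun U hU => halving U (hU.trans hT'T.subset)
    refine ⟨insert b A, ?_, cover_of_cover_T' A hcover⟩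
    have hlog : Nat.log 2 #T' + 1 ≤ Nat.log 2 #T := by
      have h2 : 2 ≤ #T := by have := hT'.card_pos; omega
      calc Nat.log 2 #T' + 1 ≤ Nat.log 2 (#T / 2) + 1 :=
            Nat.add_le_add_right (Nat.log_mono_right (by omega)) 1
        _ = Nat.log 2 #T := by
            rw [Nat.log_div_base]; have := Nat.log_pos one_lt_two h2; omega
    calc #(insert b A) ≤ #A + 1 := card_insert_le b A
      _ ≤ Nat.log 2 #T + 1 := by omega

end Finset

namespace Polynomial

variable {R : Type*} [CommRing R] [IsDomain R] [Fintype R] [DecidableEq R]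

def IsSingletonAt (S : Finset R[X]) (P : R[X]) (a : R) : Prop :=
  ∀ Q ∈ S, Q ≠ P → Q.eval a ≠ P.eval a

theorem card_filter_eval_eq_le_s9 {P Q : R[X]} {c : ℕ} (hPQ : P ≠ Q) (hP : P.natDegree ≤ c)
    (hQ : Q.natDegree ≤ c) : #{a | P.eval a = Q.eval a} ≤ c := by
  have hPQ' : P - Q ≠ 0 := sub_ne_zero.2 hPQ
  calc #{a | P.eval a = Q.eval a} ≤ (P - Q).natDegree :=
        card_le_degree_of_subset_roots fun a ha => by
          rw [mem_roots hPQ', IsRoot, eval_sub, sub_eq_zero]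
          exact (mem_filter.1 ha).2
    _ ≤ c := (natDegree_sub_le P Q).trans (max_le hP hQ)

open Classical in
theorem card_filter_not_isSingletonAt_le {S : Finset R[X]} {c : ℕ}
    (hdeg : ∀ Q ∈ S, Q.natDegree ≤ c) {P : R[X]} (hP : P ∈ S) :
    #{a | ¬ IsSingletonAt S P a} ≤ c * #S := by
  have hsub : ({a | ¬ IsSingletonAt S P a} : Finset R) ⊆
      (S.erase P).biUnion fun Q => {a | Q.eval a = P.eval a} := by
    intro a ha
    obtain ⟨Q, hQ, hQP, heval⟩ : ∃ Q ∈ S, Q ≠ P ∧ Q.eval a = P.eval a := by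
      simpa [IsSingletonAt] using ha
    simp only [mem_biUnion, mem_erase, mem_filter, mem_univ, true_and]
    exact ⟨Q, ⟨hQP, hQ⟩, heval⟩
  calc #{a | ¬ IsSingletonAt S P a} ≤ #(S.erase P) * c :=
        (card_le_card hsub).trans <| card_biUnion_le_card_mul _ _ _ fun Q hQ =>
          card_filter_eval_eq_le_s9 (ne_of_mem_erase hQ) (hdeg Q (mem_of_mem_erase hQ)) (hdeg P hP)
    _ ≤ c * #S := by rw [mul_comm]; exact Nat.mul_le_mul_left c card_erase_le

open Classical in
theorem exists_two_mul_card_filter_not_isSingletonAt_le {S : Finset R[X]} {c : ℕ}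
    (hdeg : ∀ Q ∈ S, Q.natDegree ≤ c) (hcard : 2 * c * #S ≤ Fintype.card R)
    {T : Finset R[X]} (hT : T ⊆ S) :
    ∃ a, 2 * #{P ∈ T | ¬ IsSingletonAt S P a} ≤ #T := by
  have double_count : ∑ a : R, #{P ∈ T | ¬ IsSingletonAt S P a} =
      ∑ P ∈ T, #{a | ¬ IsSingletonAt S P a} :=
    sum_card_bipartiteAbove_eq_sum_card_bipartiteBelow (fun a P => ¬ IsSingletonAt S P a)
  have hsum : ∑ a : R, 2 * #{P ∈ T | ¬ IsSingletonAt S P a} ≤ ∑ _a : R, #T := by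
    calc ∑ a : R, 2 * #{P ∈ T | ¬ IsSingletonAt S P a}
        = 2 * ∑ P ∈ T, #{a | ¬ IsSingletonAt S P a} := by rw [← mul_sum, double_count]
      _ ≤ 2 * (#T * (c * #S)) := Nat.mul_le_mul_left 2 <|
          sum_le_card_nsmul _ _ _ fun P hP => card_filter_not_isSingletonAt_le hdeg (hT hP)
      _ = 2 * c * #S * #T := by ring
      _ ≤ Fintype.card R * #T := Nat.mul_le_mul_right _ hcard
      _ = ∑ _a : R, #T := by simp
  obtain ⟨a, -, ha⟩ := exists_le_of_sum_le univ_nonempty hsum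
  exact ⟨a, ha⟩

end Polynomial

theorem exists_singleton_assignments_general (q : ℕ) (hq : q.Prime) (c : ℕ)
    (S : Finset (Polynomial (ZMod q)))
    (hdeg : ∀ R ∈ S, R.natDegree ≤ c) (hq2 : 2 * c * S.card ≤ q) :
    ∃ A : Finset (ZMod q), A.card ≤ Nat.log 2 S.card + 1 ∧
      ∀ P ∈ S, ∃ a ∈ A, ∀ R ∈ S, R ≠ P → R.eval a ≠ P.eval a := by
  have : Fact q.Prime := ⟨hq⟩
  exact S.exists_cover_card_le_log_of_halving (fun P a => IsSingletonAt S P a) fun T hT =>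
    exists_two_mul_card_filter_not_isSingletonAt_le hdeg (by rwa [ZMod.card]) hT

/-- Main result of the length-reduction technique: for a nonempty finite set `S`
of polynomials over `𝔽_q` of degree at most `c`, with `q ≥ 2c|S|`, there is a set
`A` of at most `log₂ |S| + 1` assignments such that every polynomial of `S`
appears as a singleton at some assignment of `A`. -/
theorem exists_singleton_assignments (q : ℕ) (hq : q.Prime) (c : ℕ)
    (S : Finset (Polynomial (ZMod q))) (hS : S.Nonempty)
    (hdeg : ∀ R ∈ S, R.natDegree ≤ c) (hq2 : 2 * c * S.card ≤ q) :
    ∃ A : Finset (ZMod q), A.card ≤ Nat.log 2 S.card + 1 ∧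
      ∀ P ∈ S, ∃ a ∈ A, ∀ R ∈ S, R ≠ P → R.eval a ≠ P.eval a :=
  exists_singleton_assignments_general q hq c S hdeg hq2
end

section
/- Let T be a finite set of natural numbers with |T| = n, all of whose elements are smaller than 2^b for some b ≥ 1, and let P be a finite set of primes with |P| > (n·(n−1)/2) · b. Then there exists a prime p ∈ P such that reduction modulo p is injective on T: for all x, y ∈ T, if x ≡ y (mod p) then x = y. (The paper's guarantee that testing enough primes yields one producing a vector with no multiples, i.e., all non-zeros appear as singletons.) -/
/-!
If every prime of `P` identified two elements `x < y` of `T`, it would divide `y - x`. A number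
below `2^b` has at most `b` distinct prime factors, since their product is at least `2` to the
number of them, so the primes dividing one of the `n(n-1)/2` differences are at most
`n(n-1)/2 · b` many, fewer than `#P`.
-/

open Finset

theorem Nat.card_primeFactors_le_of_lt_two_pow {d b : ℕ} (h : d < 2 ^ b) :
    #d.primeFactors ≤ b := by
  rcases eq_or_ne d 0 with rfl | hd
  · simp
  have hprod : 2 ^ #d.primeFactors ≤ d :=
    calc 2 ^ #d.primeFactors ≤ ∏ p ∈ d.primeFactors, p :=
          pow_card_le_prod _ _ _ fun p hp => (Nat.prime_of_mem_primeFactors hp).two_le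
      _ ≤ d := Nat.le_of_dvd (Nat.pos_of_ne_zero hd) (Nat.prod_primeFactors_dvd d)
  exact (Nat.pow_lt_pow_iff_right one_lt_two).mp (hprod.trans_lt h) |>.le

theorem Nat.mem_primeFactors_sub_of_modEq {p x y : ℕ} (hp : p.Prime) (h : x ≡ y [MOD p])
    (hxy : x < y) : p ∈ (y - x).primeFactors :=
  Nat.mem_primeFactors.mpr ⟨hp, (Nat.modEq_iff_dvd' hxy.le).mp h, Nat.sub_ne_zero_of_lt hxy⟩

theorem subset_biUnion_primeFactors_sub {T P : Finset ℕ} (hP : ∀ p ∈ P, p.Prime)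
    (hmultiple : ∀ p ∈ P, ∃ x ∈ T, ∃ y ∈ T, x ≡ y [MOD p] ∧ x ≠ y) :
    P ⊆ {q ∈ T ×ˢ T | q.1 < q.2}.biUnion fun q => (q.2 - q.1).primeFactors := by
  intro p hp
  obtain ⟨x, hx, y, hy, hxy, hne⟩ := hmultiple p hp
  simp only [mem_biUnion, mem_filter, mem_product, Prod.exists]
  rcases hne.lt_or_gt with hlt | hgt
  · exact ⟨x, y, ⟨⟨hx, hy⟩, hlt⟩, Nat.mem_primeFactors_sub_of_modEq (hP p hp) hxy hlt⟩
  · exact ⟨y, x, ⟨⟨hy, hx⟩, hgt⟩, Nat.mem_primeFactors_sub_of_modEq (hP p hp) hxy.symm hgt⟩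

theorem card_le_choose_two_mul_of_forall_exists_modEq {T P : Finset ℕ} {b : ℕ}
    (hT : ∀ x ∈ T, x < 2 ^ b) (hP : ∀ p ∈ P, p.Prime)
    (hmultiple : ∀ p ∈ P, ∃ x ∈ T, ∃ y ∈ T, x ≡ y [MOD p] ∧ x ≠ y) :
    #P ≤ (#T).choose 2 * b :=
  calc #P ≤ #({q ∈ T ×ˢ T | q.1 < q.2}.biUnion fun q => (q.2 - q.1).primeFactors) :=
        card_le_card (subset_biUnion_primeFactors_sub hP hmultiple)
    _ ≤ ∑ q ∈ T ×ˢ T with q.1 < q.2, #(q.2 - q.1).primeFactors := card_biUnion_le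
    _ ≤ ∑ _q ∈ {q ∈ T ×ˢ T | q.1 < q.2}, b := by
        refine sum_le_sum fun q hq => Nat.card_primeFactors_le_of_lt_two_pow ?_
        simp only [mem_filter, mem_product] at hq
        exact (Nat.sub_le _ _).trans_lt (hT q.2 hq.1.2)
    _ = (#T).choose 2 * b := by rw [sum_const, smul_eq_mul, card_product_filter_lt]

theorem exists_prime_injective_mod_general (T : Finset ℕ) (n b : ℕ) (hn : T.card = n)
    (hT : ∀ x ∈ T, x < 2 ^ b)
    (P : Finset ℕ) (hP : ∀ p ∈ P, p.Prime) (hPcard : n * (n - 1) / 2 * b < P.card) :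
    ∃ p ∈ P, ∀ x ∈ T, ∀ y ∈ T, x ≡ y [MOD p] → x = y := by
  by_contra! hmultiple
  have hle := card_le_choose_two_mul_of_forall_exists_modEq hT hP hmultiple
  rw [hn, Nat.choose_two_right] at hle
  exact hle.not_gt hPcard

/-- If `T` has `n` elements, all smaller than `2^b` (with `b ≥ 1`), and `P` is a set
of more than `(n(n-1)/2) * b` primes, then some prime `p ∈ P` produces only
singletons: reduction modulo `p` is injective on `T`. -/
theorem exists_prime_injective_mod (T : Finset ℕ) (n b : ℕ) (hn : T.card = n)
    (hb : 1 ≤ b) (hT : ∀ x ∈ T, x < 2 ^ b)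
    (P : Finset ℕ) (hP : ∀ p ∈ P, p.Prime) (hPcard : n * (n - 1) / 2 * b < P.card) :
    ∃ p ∈ P, ∀ x ∈ T, ∀ y ∈ T, x ≡ y [MOD p] → x = y :=
  exists_prime_injective_mod_general T n b hn hT P hP hPcard
end
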